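/- Let Γ be a connected finite simplicial graph, [v] a maximal equivalence class, and w a vertex with w ∉ J_[v]. Then the set J_[v] ∖ st(w) is nonempty and the induced subgraph of Γ on J_[v] ∖ st(w) is connected. -/

import Mathlib

open SimpleGraph

namespace RaagPaper

variable {V : Type*}

/-- The link of a vertex: the set of vertices adjacent to it. -/
def lk (G : SimpleGraph V) (v : V) : Set V := G.neighborSet v

/-- The (closed) star of a vertex: `st(v) = lk(v) ∪ {v}`. -/
def st (G : SimpleGraph V) (v : V) : Set V := insert v (G.neighborSet v)

/-- The preorder on vertices: `v ≤ w` iff `lk(v) ⊆ st(w)`. -/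
def vle (G : SimpleGraph V) (v w : V) : Prop := lk G v ⊆ st G w

/-- Equivalence of vertices: `v ∼ w` iff `v ≤ w` and `w ≤ v`. -/
def vequiv (G : SimpleGraph V) (v w : V) : Prop := vle G v w ∧ vle G w v

/-- The equivalence class `[v]` of a vertex `v`. -/
def cls (G : SimpleGraph V) (v : V) : Set V := {u | vequiv G u v}

/-- `[v]` is maximal with respect to the partial order induced by `≤`. -/
def IsMaximalClass (G : SimpleGraph V) (v : V) : Prop := ∀ w, vle G v w → vle G w v

/-- `L_[v] = lk(v) \ [v]`. -/
def Lset (G : SimpleGraph V) (v : V) : Set V := lk G v \ cls G v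

/-- `J_[v] = [v] ∪ L_[v]`, the join associated to `[v]`. -/
def Jset (G : SimpleGraph V) (v : V) : Set V := cls G v ∪ Lset G v

/-- `v ∈ V_ab` : any two distinct vertices of `[v]` are adjacent (so `A_[v]` is abelian). -/
def Vab (G : SimpleGraph V) (v : V) : Prop :=
  ∀ x ∈ cls G v, ∀ y ∈ cls G v, x ≠ y → G.Adj x y

/-!
Every vertex of `L_[v]` is adjacent to every vertex of `[v]`, and `v` itself survives in
`J_[v] ∖ st(w)` because `w ∉ J_[v] ⊇ st(v)`. So every surviving vertex of `L_[v]` is adjacent to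
`v`, and a surviving `u ∈ [v]` reaches `v` through a surviving vertex of `L_[v]` if there is one.
Otherwise `L_[v] ⊆ st(w)`. An equivalence class is either a clique or has no edges; in the first
case `u` is adjacent to `v`, in the second `lk(v) = L_[v] ⊆ st(w)`, i.e. `v ≤ w`, and maximality
of `[v]` would put `w` in `[v]`.
-/

section

variable {G : SimpleGraph V} {a b c u v w x y z : V}

lemma mem_st : x ∈ st G y ↔ x = y ∨ G.Adj y x := Iff.rfl

lemma mem_st_comm : x ∈ st G y ↔ y ∈ st G x := by
  simp only [mem_st, eq_comm, G.adj_comm]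

lemma adj_of_vle (h : vle G x y) (hxz : G.Adj x z) (hzy : z ≠ y) : G.Adj y z :=
  (mem_st.1 (h hxz)).resolve_left hzy

lemma vle_refl (x : V) : vle G x x := fun _ hy => Or.inr hy

lemma vle_trans (hab : vle G a b) (hbc : vle G b c) : vle G a c := by
  intro x hax
  by_cases hxb : x = b
  · subst hxb
    rcases mem_st.1 (hbc hax.symm) with rfl | hca
    · exact Or.inr hax
    · rcases mem_st.1 (hab hca.symm) with rfl | hxc
      · exact Or.inl rfl
      · exact Or.inr hxc.symm
  · exact hbc (adj_of_vle hab hax hxb)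

lemma mem_cls_self : v ∈ cls G v := ⟨vle_refl v, vle_refl v⟩

lemma vle_of_mem_cls (hx : x ∈ cls G v) (hy : y ∈ cls G v) : vle G x y :=
  vle_trans hx.1 hy.2

lemma vab_of_adj (ha : a ∈ cls G v) (hb : b ∈ cls G v) (hab : G.Adj a b) : Vab G v := by
  intro c hc d hd hcd
  obtain ⟨e, he, hce⟩ : ∃ e ∈ cls G v, G.Adj c e := by
    by_cases hcb : c = b
    · exact ⟨a, ha, hcb ▸ hab.symm⟩
    · exact ⟨b, hb, adj_of_vle (vle_of_mem_cls ha hc) hab (Ne.symm hcb)⟩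
  exact (adj_of_vle (vle_of_mem_cls he hd) hce.symm hcd).symm

lemma adj_of_mem_cls_of_mem_Lset (hu : u ∈ cls G v) (hx : x ∈ Lset G v) : G.Adj u x :=
  adj_of_vle hu.2 hx.1 fun hxu => hx.2 (hxu ▸ hu)

lemma st_subset_Jset : st G v ⊆ Jset G v := by
  rintro x (rfl | hvx)
  · exact Or.inl mem_cls_self
  · by_cases hx : x ∈ cls G v
    · exact Or.inl hx
    · exact Or.inr ⟨hvx, hx⟩

lemma mem_Jset_diff_st (hw : w ∉ Jset G v) : v ∈ Jset G v \ st G w :=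
  ⟨st_subset_Jset (Or.inl rfl), fun hvw => hw (st_subset_Jset (mem_st_comm.1 hvw))⟩

lemma vab_of_Lset_subset_st (hv : IsMaximalClass G v) (hw : w ∉ Jset G v)
    (hL : Lset G v ⊆ st G w) : Vab G v := by
  by_contra hvab
  have hvw : vle G v w := by
    intro y hvy
    by_cases hy : y ∈ cls G v
    · exact absurd (vab_of_adj mem_cls_self hy hvy) hvab
    · exact hL ⟨hvy, hy⟩
  exact hw (Or.inl ⟨hv w hvw, hvw⟩)

lemma reachable_of_mem_Jset_diff_st (hv : IsMaximalClass G v) (hw : w ∉ Jset G v)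
    (hu : u ∈ Jset G v \ st G w) :
    (G.induce (Jset G v \ st G w)).Reachable ⟨v, mem_Jset_diff_st hw⟩ ⟨u, hu⟩ := by
  rcases hu.1 with hu_cls | hu_L
  · by_cases hL : Lset G v ⊆ st G w
    · by_cases huv : v = u
      · subst huv
        rfl
      · exact Adj.reachable (vab_of_Lset_subset_st hv hw hL v mem_cls_self u hu_cls huv)
    · obtain ⟨x, hx_L, hx_st⟩ := Set.not_subset.1 hL
      let x' : ↥(Jset G v \ st G w) := ⟨x, Or.inr hx_L, hx_st⟩
      have hvx : (G.induce _).Adj ⟨v, mem_Jset_diff_st hw⟩ x' :=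
        adj_of_mem_cls_of_mem_Lset (G := G) mem_cls_self hx_L
      have hux : (G.induce _).Adj ⟨u, hu⟩ x' := adj_of_mem_cls_of_mem_Lset (G := G) hu_cls hx_L
      exact hvx.reachable.trans hux.reachable.symm
  · exact Adj.reachable (adj_of_mem_cls_of_mem_Lset (G := G) mem_cls_self hu_L)

end

theorem join_minus_star_connected_general {V : Type*} (G : SimpleGraph V)
    (v w : V)
    (hv : IsMaximalClass G v) (hw : w ∉ Jset G v) :
    (Jset G v \ st G w).Nonempty ∧
    (SimpleGraph.induce (Jset G v \ st G w : Set V) G).Connected :=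
  ⟨⟨v, mem_Jset_diff_st hw⟩, (connected_iff_exists_forall_reachable _).2
    ⟨_, fun ⟨_, hu⟩ => reachable_of_mem_Jset_diff_st hv hw hu⟩⟩

/-- for a maximal class `[v]` and a vertex `w ∉ J_[v]`, the set `J_[v] \ st(w)`
is nonempty and the induced subgraph on it is connected. -/
theorem join_minus_star_connected {V : Type*} [Fintype V] [Nonempty V] (G : SimpleGraph V)
    (hconn : G.Connected) (v w : V)
    (hv : IsMaximalClass G v) (hw : w ∉ Jset G v) :
    (Jset G v \ st G w).Nonempty ∧
    (SimpleGraph.induce (Jset G v \ st G w : Set V) G).Connected :=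
  join_minus_star_connected_general G v w hv hw

end RaagPaper
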